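/- arXiv:1501.05293 — 7 statements merged into one kernel-verified Lean document; each statement's English description precedes it below -/
import Mathlib

section
/- The multiplication m on A satisfies m∘(m⊗id) = X · m∘(id⊗m) as maps A⊗A⊗A → A, where the tensor products of maps are twisted by λ. -/
open TensorProduct

def lam {R : Type*} [CommRing R] (X Y Z : Rˣ) (g h : ℤ × ℤ) : Rˣ :=
  X ^ (g.1 * h.1) * Y ^ (g.2 * h.2) * Z ^ (g.1 * h.2 - h.1 * g.2)

/-- The map scaling the degree-`(1,0)` component (spanned by `v₊ = (1,0)`) by `c₁` and the
degree-`(0,-1)` component (spanned by `v₋ = (0,1)`) by `c₂`. -/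
def scMap {R : Type*} [CommRing R] (c₁ c₂ : R) : (R × R) →ₗ[R] (R × R) :=
  (c₁ • (LinearMap.id : R →ₗ[R] R)).prodMap (c₂ • (LinearMap.id : R →ₗ[R] R))

/-- Twisted associativity `m∘(m⊗id) = X · m∘(id⊗m)` as maps `A⊗A⊗A → A`. Here `A = R×R`
is free on `v₊ = (1,0)` of degree `(1,0)` and `v₋ = (0,1)` of degree `(0,-1)`, and the
twisted tensor `id⊗m` is `TensorProduct.map (scMap λ((-1,0),(1,0)) λ((-1,0),(0,-1))) m`
since `m` has degree `(-1,0)`. -/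
theorem twisted_associativity {R : Type*} [CommRing R] (X Y Z : Rˣ)
    (hX : X ^ 2 = 1) (hY : Y ^ 2 = 1)
    (m : ((R × R) ⊗[R] (R × R)) →ₗ[R] (R × R))
    (hpp : m (((1 : R), (0 : R)) ⊗ₜ[R] ((1 : R), (0 : R))) = (1, 0))
    (hpm : m (((1 : R), (0 : R)) ⊗ₜ[R] ((0 : R), (1 : R))) = (0, 1))
    (hmp : m (((0 : R), (1 : R)) ⊗ₜ[R] ((1 : R), (0 : R))) = ((X * Z : Rˣ) : R) • (0, 1))
    (hmm : m (((0 : R), (1 : R)) ⊗ₜ[R] ((0 : R), (1 : R))) = 0) :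
    m ∘ₗ TensorProduct.map m LinearMap.id =
      (X : R) • (m ∘ₗ
        TensorProduct.map (scMap (lam X Y Z (-1, 0) (1, 0) : R)
            (lam X Y Z (-1, 0) (0, -1) : R)) m ∘ₗ
        (TensorProduct.assoc R (R × R) (R × R) (R × R)).toLinearMap) := by
  have hXi : X⁻¹ = X := by
    rw [inv_eq_of_mul_eq_one_left]; rw [← sq, hX]
  have hl1 : (lam X Y Z (-1, 0) (1, 0) : R) = (X : R) := by
    simp [lam, hXi]
  have hl2 : (lam X Y Z (-1, 0) (0, -1) : R) = (Z : R) := by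
    simp [lam]
  have hs1 : scMap (lam X Y Z (-1, 0) (1, 0) : R) (lam X Y Z (-1, 0) (0, -1) : R)
      (((1:R), (0:R))) = (X : R) • ((1:R), (0:R)) := by
    simp [scMap, hl1, hl2]
  have hs2 : scMap (lam X Y Z (-1, 0) (1, 0) : R) (lam X Y Z (-1, 0) (0, -1) : R)
      (((0:R), (1:R))) = (Z : R) • ((0:R), (1:R)) := by
    simp [scMap, hl1, hl2]
  have hX' : (X : R) * (X : R) = 1 := by
    rw [← Units.val_mul, ← sq, hX, Units.val_one]
  apply TensorProduct.ext'
  intro x c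
  induction x using TensorProduct.induction_on with
  | zero => simp only [zero_tmul, LinearMap.map_zero, LinearMap.smul_apply, smul_zero]
  | add x y hx hy => simp only [add_tmul, map_add, hx, hy, LinearMap.smul_apply]
  | tmul a b =>
    have ha : a = a.1 • ((1:R),(0:R)) + a.2 • ((0:R),(1:R)) := by
      simp [Prod.ext_iff]
    have hb : b = b.1 • ((1:R),(0:R)) + b.2 • ((0:R),(1:R)) := by
      simp [Prod.ext_iff]
    have hc : c = c.1 • ((1:R),(0:R)) + c.2 • ((0:R),(1:R)) := by
      simp [Prod.ext_iff]
    have hX2 : (X : R) ^ 2 = 1 := by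
      rw [← Units.val_pow_eq_pow_val, hX, Units.val_one]
    rw [ha, hb, hc]
    simp only [add_tmul, tmul_add, ← smul_tmul', tmul_smul, map_add, map_smul,
      LinearMap.comp_apply, LinearMap.smul_apply, TensorProduct.map_tmul,
      LinearMap.id_apply, LinearEquiv.coe_coe, TensorProduct.assoc_tmul,
      hpp, hpm, hmp, hmm, hs1, hs2, smul_zero, tmul_zero, zero_tmul, map_zero,
      add_zero, zero_add]
    simp only [smul_smul, Prod.smul_mk, smul_eq_mul, mul_zero, mul_one,
      Prod.mk_add_mk, add_zero, zero_add, Prod.mk.injEq]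
    constructor <;> ring_nf <;> simp [hX2] <;> ring
end

section
/- The comultiplication Δ on A satisfies (Δ⊗id)∘Δ = Y · (id⊗Δ)∘Δ as maps A → A⊗A⊗A, where the tensor products of maps are twisted by λ. -/
open TensorProduct

/-- Twisted coassociativity `(Δ⊗id)∘Δ = Y · (id⊗Δ)∘Δ` as maps `A → A⊗A⊗A`, where `A = R×R`
with `v₊ = (1,0)` of degree `(1,0)`, `v₋ = (0,1)` of degree `(0,-1)`, and the twisted tensor
`id⊗Δ` is `TensorProduct.map (scMap λ((0,-1),(1,0)) λ((0,-1),(0,-1))) Δ` since `Δ` has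
degree `(0,-1)`; the two sides are compared via the associator. -/
theorem twisted_coassociativity {R : Type*} [CommRing R] (X Y Z : Rˣ)
    (hX : X ^ 2 = 1) (hY : Y ^ 2 = 1)
    (Δ : (R × R) →ₗ[R] ((R × R) ⊗[R] (R × R)))
    (hΔp : Δ ((1 : R), (0 : R)) =
      ((0 : R), (1 : R)) ⊗ₜ[R] ((1 : R), (0 : R)) +
        ((Y * Z : Rˣ) : R) • (((1 : R), (0 : R)) ⊗ₜ[R] ((0 : R), (1 : R))))
    (hΔm : Δ ((0 : R), (1 : R)) = ((0 : R), (1 : R)) ⊗ₜ[R] ((0 : R), (1 : R))) :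
    (TensorProduct.assoc R (R × R) (R × R) (R × R)).toLinearMap ∘ₗ
        TensorProduct.map Δ LinearMap.id ∘ₗ Δ =
      (Y : R) • (TensorProduct.map (scMap (lam X Y Z (0, -1) (1, 0) : R)
          (lam X Y Z (0, -1) (0, -1) : R)) Δ ∘ₗ Δ) := by
  have hL1 : (lam X Y Z (0, -1) (1, 0) : R) = (Z : R) := by norm_num [lam]
  have hL2 : (lam X Y Z (0, -1) (0, -1) : R) = (Y : R) := by norm_num [lam]
  have hY1 : (Y : R) * (Y : R) = 1 := by
    have := congrArg (Units.val) hY; push_cast [pow_two] at this; exact this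
  have hsc1 : scMap (lam X Y Z (0, -1) (1, 0) : R) (lam X Y Z (0, -1) (0, -1) : R)
      ((1 : R), (0 : R)) = (Z : R) • ((1 : R), (0 : R)) := by
    simp [scMap, hL1, Prod.smul_def]
  have hsc2 : scMap (lam X Y Z (0, -1) (1, 0) : R) (lam X Y Z (0, -1) (0, -1) : R)
      ((0 : R), (1 : R)) = (Y : R) • ((0 : R), (1 : R)) := by
    simp [scMap, hL2, Prod.smul_def]
  ext
  · simp only [LinearMap.comp_apply, LinearMap.coe_inl, LinearMap.inl_apply,
      LinearMap.smul_apply, hΔp, hΔm, map_add, map_smul, TensorProduct.map_tmul,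
      LinearMap.id_apply, TensorProduct.assoc_tmul, LinearEquiv.coe_coe,
      hsc1, hsc2, TensorProduct.smul_tmul', TensorProduct.tmul_smul,
      smul_smul, Units.val_mul, smul_add]
    simp only [TensorProduct.add_tmul, TensorProduct.smul_tmul',
      TensorProduct.assoc_tmul, map_add, TensorProduct.tmul_smul, smul_smul]
    rw [show (Y:R)*(Z:R)*((Y:R)*(Z:R)) = (Y:R)*(Y:R)*((Z:R)*(Z:R)) by ring,
      show (Y:R)*((Y:R)*(Z:R)*(Z:R)) = (Y:R)*(Y:R)*((Z:R)*(Z:R)) by ring,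
      hY1, one_smul, TensorProduct.tmul_add]
    simp only [← TensorProduct.smul_tmul', TensorProduct.tmul_smul, add_assoc]
  · simp only [LinearMap.comp_apply, LinearMap.coe_inr, LinearMap.inr_apply,
      LinearMap.smul_apply, hΔm, TensorProduct.map_tmul, LinearMap.id_apply,
      TensorProduct.assoc_tmul, LinearEquiv.coe_coe, hsc2,
      TensorProduct.smul_tmul', smul_smul, hY1, one_smul]
end

section
/- The Frobenius-type relation (id⊗m)∘(Δ⊗id) = Z · Δ∘m holds as maps A⊗A → A⊗A, with tensor products of maps twisted by λ. -/
open TensorProduct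

/-- Frobenius-type relation `(id⊗m)∘(Δ⊗id) = Z · Δ∘m` as maps `A⊗A → A⊗A`, with `A = R×R`
free on `v₊ = (1,0)` of degree `(1,0)` and `v₋ = (0,1)` of degree `(0,-1)`; the twisted
tensor `id⊗m` is `TensorProduct.map (scMap λ((-1,0),(1,0)) λ((-1,0),(0,-1))) m` since `m`
has degree `(-1,0)`, precomposed with the associator. -/
theorem twisted_frobenius {R : Type*} [CommRing R] (X Y Z : Rˣ)
    (hX : X ^ 2 = 1) (hY : Y ^ 2 = 1)
    (m : ((R × R) ⊗[R] (R × R)) →ₗ[R] (R × R))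
    (Δ : (R × R) →ₗ[R] ((R × R) ⊗[R] (R × R)))
    (hpp : m (((1 : R), (0 : R)) ⊗ₜ[R] ((1 : R), (0 : R))) = (1, 0))
    (hpm : m (((1 : R), (0 : R)) ⊗ₜ[R] ((0 : R), (1 : R))) = (0, 1))
    (hmp : m (((0 : R), (1 : R)) ⊗ₜ[R] ((1 : R), (0 : R))) = ((X * Z : Rˣ) : R) • (0, 1))
    (hmm : m (((0 : R), (1 : R)) ⊗ₜ[R] ((0 : R), (1 : R))) = 0)
    (hΔp : Δ ((1 : R), (0 : R)) =
      ((0 : R), (1 : R)) ⊗ₜ[R] ((1 : R), (0 : R)) +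
        ((Y * Z : Rˣ) : R) • (((1 : R), (0 : R)) ⊗ₜ[R] ((0 : R), (1 : R))))
    (hΔm : Δ ((0 : R), (1 : R)) = ((0 : R), (1 : R)) ⊗ₜ[R] ((0 : R), (1 : R))) :
    TensorProduct.map (scMap (lam X Y Z (-1, 0) (1, 0) : R)
        (lam X Y Z (-1, 0) (0, -1) : R)) m ∘ₗ
      (TensorProduct.assoc R (R × R) (R × R) (R × R)).toLinearMap ∘ₗ
      TensorProduct.map Δ LinearMap.id =
    (Z : R) • (Δ ∘ₗ m) := by
  have hX1 : (X : R) * (X : R) = 1 := by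
    have := congrArg (Units.val) hX; simpa [pow_two] using this
  have hlam1 : ((lam X Y Z (-1, 0) (1, 0) : Rˣ) : R) = (X : R) := by
    have h1 : lam X Y Z (-1, 0) (1, 0) = X⁻¹ := by simp [lam]
    have h2 : X⁻¹ = X := inv_eq_of_mul_eq_one_right (by simpa [pow_two] using hX)
    rw [h1, h2]
  have hlamZ : ((lam X Y Z (-1, 0) (0, -1) : Rˣ) : R) = (Z : R) := by
    simp [lam]
  apply TensorProduct.ext'
  intro x y
  obtain ⟨a, b⟩ := x
  obtain ⟨c, d⟩ := y
  have hx : ((a, b) : R × R) = a • ((1:R), (0:R)) + b • ((0:R), (1:R)) := by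
    simp [Prod.ext_iff]
  have hy : ((c, d) : R × R) = c • ((1:R), (0:R)) + d • ((0:R), (1:R)) := by
    simp [Prod.ext_iff]
  rw [hx, hy]
  simp only [add_tmul, tmul_add, ← smul_tmul', tmul_smul, map_add, map_smul,
    LinearMap.comp_apply, TensorProduct.map_tmul, LinearMap.id_apply,
    LinearEquiv.coe_coe, LinearMap.smul_apply]
  rw [hΔp, hΔm, hpp, hpm, hmp, hmm]
  simp only [add_tmul, ← smul_tmul', tmul_smul, map_add, map_smul, map_zero, smul_zero,
    TensorProduct.assoc_tmul, TensorProduct.map_tmul, TensorProduct.tmul_zero,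
    hpp, hpm, hmp, hmm, hΔp, hΔm, scMap, LinearMap.prodMap_apply, LinearMap.smul_apply,
    LinearMap.id_apply, hlam1, hlamZ]
  have e1 : ∀ r : R, (((0:R), r • (1:R)) : R × R) = r • ((0:R), (1:R)) := by
    intro r; simp
  have e2 : ∀ r : R, ((r • (1:R), (0:R)) : R × R) = r • ((1:R), (0:R)) := by
    intro r; simp
  simp only [e1, e2, ← smul_tmul']
  have key : ∀ t : (R × R) ⊗[R] (R × R),
      ((Y * Z : Rˣ) : R) • ((X * Z : Rˣ) : R) • (X : R) • t =
        (Z : R) • ((Y * Z : Rˣ) : R) • t := by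
    intro t
    simp only [smul_smul]
    congr 1
    simp only [Units.val_mul]
    linear_combination ((Y : R) * Z * Z) * hX1
  simp only [key]
  module
end

section
/- The multiplication m is twisted-commutative with parameter X and the comultiplication Δ is twisted-cocommutative with parameter Y: m∘τ = X·m and τ∘Δ = Y·Δ, where τ(x⊗y) = λ(deg x, deg y) y⊗x is the symmetry. -/
open TensorProduct

/-- The basis of `A = R×R`: `basA 0 = v₊`, `basA 1 = v₋`. -/
def basA (R : Type*) [CommRing R] : Fin 2 → R × R := ![(1, 0), (0, 1)]

/-- The degrees of the basis elements: `deg v₊ = (1,0)`, `deg v₋ = (0,-1)`. -/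
def dgA : Fin 2 → ℤ × ℤ := ![(1, 0), (0, -1)]

lemma basA_expand {R : Type*} [CommRing R] (x : R × R) :
    x = x.1 • basA R 0 + x.2 • basA R 1 := by
  simp [basA, Prod.ext_iff]

lemma ext_basA {R M : Type*} [CommRing R] [AddCommGroup M] [Module R M]
    (f g : (R × R) →ₗ[R] M) (h : ∀ i : Fin 2, f (basA R i) = g (basA R i)) :
    f = g := by
  apply LinearMap.ext
  intro x
  rw [basA_expand (R := R) x]
  simp only [map_add, map_smul, h]

lemma ext_basA2 {R M : Type*} [CommRing R] [AddCommGroup M] [Module R M]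
    (f g : ((R × R) ⊗[R] (R × R)) →ₗ[R] M)
    (h : ∀ i j : Fin 2, f (basA R i ⊗ₜ[R] basA R j) = g (basA R i ⊗ₜ[R] basA R j)) :
    f = g := by
  apply TensorProduct.ext'
  intro x y
  rw [basA_expand (R := R) x, basA_expand (R := R) y]
  simp only [tmul_add, add_tmul, smul_tmul, tmul_smul, map_add, map_smul, h]

/-- `m` is twisted-commutative with parameter `X` and `Δ` twisted-cocommutative with
parameter `Y`: `m∘τ = X·m` and `τ∘Δ = Y·Δ`, where `τ` is the symmetry, determined on
basis tensors by `τ(x⊗y) = λ(deg x, deg y)·y⊗x`. -/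
theorem twisted_comm_cocomm {R : Type*} [CommRing R] (X Y Z : Rˣ)
    (hX : X ^ 2 = 1) (hY : Y ^ 2 = 1)
    (m : ((R × R) ⊗[R] (R × R)) →ₗ[R] (R × R))
    (Δ : (R × R) →ₗ[R] ((R × R) ⊗[R] (R × R)))
    (tau : ((R × R) ⊗[R] (R × R)) →ₗ[R] ((R × R) ⊗[R] (R × R)))
    (hpp : m (basA R 0 ⊗ₜ[R] basA R 0) = basA R 0)
    (hpm : m (basA R 0 ⊗ₜ[R] basA R 1) = basA R 1)
    (hmp : m (basA R 1 ⊗ₜ[R] basA R 0) = ((X * Z : Rˣ) : R) • basA R 1)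
    (hmm : m (basA R 1 ⊗ₜ[R] basA R 1) = 0)
    (hΔp : Δ (basA R 0) =
      basA R 1 ⊗ₜ[R] basA R 0 + ((Y * Z : Rˣ) : R) • (basA R 0 ⊗ₜ[R] basA R 1))
    (hΔm : Δ (basA R 1) = basA R 1 ⊗ₜ[R] basA R 1)
    (htau : ∀ i j : Fin 2, tau (basA R i ⊗ₜ[R] basA R j) =
      (lam X Y Z (dgA i) (dgA j) : R) • (basA R j ⊗ₜ[R] basA R i)) :
    m ∘ₗ tau = (X : R) • m ∧ tau ∘ₗ Δ = (Y : R) • Δ := by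
  have l00 : lam X Y Z (dgA 0) (dgA 0) = X := by
    simp [lam, dgA]
  have l01 : lam X Y Z (dgA 0) (dgA 1) = Z⁻¹ := by
    simp [lam, dgA]
  have l10 : lam X Y Z (dgA 1) (dgA 0) = Z := by
    simp [lam, dgA]
  have l11 : lam X Y Z (dgA 1) (dgA 1) = Y := by
    simp [lam, dgA]
  constructor
  · apply ext_basA2
    simp only [Fin.forall_fin_two]
    refine ⟨⟨?_, ?_⟩, ?_, ?_⟩
    · rw [LinearMap.comp_apply, LinearMap.smul_apply, htau 0 0, l00, map_smul, hpp]
    · rw [LinearMap.comp_apply, LinearMap.smul_apply, htau 0 1, l01, map_smul, hmp, hpm,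
        smul_smul, ← Units.val_mul, show Z⁻¹ * (X * Z) = X by rw [mul_comm X Z, ← mul_assoc, inv_mul_cancel, one_mul]]
    · rw [LinearMap.comp_apply, LinearMap.smul_apply, htau 1 0, l10, map_smul, hpm, hmp,
        smul_smul, ← Units.val_mul,
        show X * (X * Z) = Z by rw [← mul_assoc, ← sq, hX, one_mul]]
    · rw [LinearMap.comp_apply, LinearMap.smul_apply, htau 1 1, map_smul, hmm,
        smul_zero, smul_zero]
  · apply ext_basA
    simp only [Fin.forall_fin_two]
    constructor
    · rw [LinearMap.comp_apply, LinearMap.smul_apply, hΔp, map_add, map_smul, htau 1 0,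
        htau 0 1, l10, l01, smul_smul, ← Units.val_mul,
        show Y * Z * Z⁻¹ = Y by rw [mul_assoc, mul_inv_cancel, mul_one], smul_add, smul_smul, ← Units.val_mul,
        show Y * (Y * Z) = Z by rw [← mul_assoc, ← sq, hY, one_mul], add_comm]
    · rw [LinearMap.comp_apply, LinearMap.smul_apply, hΔm, htau 1 1, l11]
end

section
/- The Frobenius pairing β : A × A → R, β(x,y) = ε(m(x⊗y)), is a perfect pairing: its Gram matrix in the basis (v₊, v₋) is [[0, 1],[XZ, 0]], whose determinant −XZ is a unit in R; hence the induced map A → Hom_R(A, R) is an isomorphism. -/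
open TensorProduct

/-- The Frobenius pairing `β(x,y) = ε(m(x⊗y))` on `A = R×R` has Gram matrix
`[[0,1],[XZ,0]]` in the basis `(v₊,v₋)`, its determinant `-XZ` is a unit, and the induced
map `A → Hom_R(A,R)` is an isomorphism (bijective). -/
theorem frobenius_pairing_perfect {R : Type*} [CommRing R] (X Y Z : Rˣ)
    (hX : X ^ 2 = 1) (hY : Y ^ 2 = 1)
    (m : ((R × R) ⊗[R] (R × R)) →ₗ[R] (R × R))
    (ε : (R × R) →ₗ[R] R)
    (hpp : m (((1 : R), (0 : R)) ⊗ₜ[R] ((1 : R), (0 : R))) = (1, 0))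
    (hpm : m (((1 : R), (0 : R)) ⊗ₜ[R] ((0 : R), (1 : R))) = (0, 1))
    (hmp : m (((0 : R), (1 : R)) ⊗ₜ[R] ((1 : R), (0 : R))) = ((X * Z : Rˣ) : R) • (0, 1))
    (hmm : m (((0 : R), (1 : R)) ⊗ₜ[R] ((0 : R), (1 : R))) = 0)
    (hεp : ε ((1 : R), (0 : R)) = 0)
    (hεm : ε ((0 : R), (1 : R)) = 1) :
    ε (m (((1 : R), (0 : R)) ⊗ₜ[R] ((1 : R), (0 : R)))) = 0 ∧
    ε (m (((1 : R), (0 : R)) ⊗ₜ[R] ((0 : R), (1 : R)))) = 1 ∧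
    ε (m (((0 : R), (1 : R)) ⊗ₜ[R] ((1 : R), (0 : R)))) = ((X * Z : Rˣ) : R) ∧
    ε (m (((0 : R), (1 : R)) ⊗ₜ[R] ((0 : R), (1 : R)))) = 0 ∧
    IsUnit (-(((X * Z : Rˣ) : R))) ∧
    Function.Bijective
      ((TensorProduct.mk R (R × R) (R × R)).compr₂ (ε ∘ₗ m)) := by
  set u : Rˣ := X * Z with hu
  set B := (TensorProduct.mk R (R × R) (R × R)).compr₂ (ε ∘ₗ m) with hB
  have key : ∀ a b c d : R, B (a, b) (c, d) = a * d + (u : R) * (b * c) := by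
    intro a b c d
    have h1 : ((a, b) : R × R) = a • ((1 : R), (0 : R)) + b • ((0 : R), (1 : R)) := by
      simp [Prod.ext_iff]
    have h2 : ((c, d) : R × R) = c • ((1 : R), (0 : R)) + d • ((0 : R), (1 : R)) := by
      simp [Prod.ext_iff]
    rw [hB]
    simp only [LinearMap.compr₂_apply, TensorProduct.mk_apply, LinearMap.comp_apply]
    rw [h1, h2]
    simp only [TensorProduct.add_tmul, TensorProduct.tmul_add, ← TensorProduct.smul_tmul',
      TensorProduct.tmul_smul, map_add, map_smul, hpp, hpm, hmp, hmm,
      smul_eq_mul, hεp, hεm, map_zero]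
    ring
  refine ⟨?_, ?_, ?_, ?_, ?_, ?_, ?_⟩
  · rw [hpp, hεp]
  · rw [hpm, hεm]
  · rw [hmp, map_smul, hεm, smul_eq_mul, mul_one]
  · rw [hmm, map_zero]
  · exact (IsUnit.neg (u.isUnit))
  · intro x y hxy
    obtain ⟨a, b⟩ := x
    obtain ⟨a', b'⟩ := y
    have e1 := congrArg (fun f => f ((0 : R), (1 : R))) hxy
    have e2 := congrArg (fun f => f ((1 : R), (0 : R))) hxy
    simp only [key] at e1 e2
    simp only [mul_one, mul_zero, add_zero, zero_add] at e1 e2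
    have hb : b = b' := by
      have := congrArg (fun r => ((u⁻¹ : Rˣ) : R) * r) e2
      simpa [← mul_assoc, Units.inv_mul] using this
    exact Prod.ext e1 hb
  · intro f
    refine ⟨(f ((0 : R), (1 : R)), ((u⁻¹ : Rˣ) : R) * f ((1 : R), (0 : R))), ?_⟩
    apply LinearMap.ext
    rintro ⟨c, d⟩
    rw [key]
    have h2 : ((c, d) : R × R) = c • ((1 : R), (0 : R)) + d • ((0 : R), (1 : R)) := by
      simp [Prod.ext_iff]
    rw [h2, map_add, map_smul, map_smul, smul_eq_mul, smul_eq_mul]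
    have : (u : R) * (((u⁻¹ : Rˣ) : R) * f ((1 : R), (0 : R)) * c)
        = f ((1 : R), (0 : R)) * c := by
      rw [← mul_assoc, ← mul_assoc, Units.mul_inv, one_mul]
    rw [this]; ring
end

section
/- Let ε be a 1-cochain on the edges of the n-cube I^n and ε' a 1-cochain on the edges of the n'-cube I^{n'}, both with values in the units of a commutative ring. Define a 1-cochain ε″ on I^{n+n'} = I^n × I^{n'} by ε″(ζ,ξ') = ε(ζ) for edges in the first factor and ε″(ξ,ζ') = (−1)^{‖ξ‖} ε'(ζ') for edges in the second factor, where ‖ξ‖ is the number of 1's in ξ. Then for every mixed 2-face S of I^{n+n'} (spanned by one edge direction from each factor), the multiplicative coboundary satisfies δε″(S) = −1. -/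
/-- The weight `‖ξ‖` of a cube vertex: the number of coordinates equal to `1`. -/
def cubeWeight {n : ℕ} (ξ : Fin n → Bool) : ℕ :=
  (Finset.univ.filter (fun k => ξ k = true)).card

theorem cubeWeight_update_true {n : ℕ} {ξ : Fin n → Bool} {i : Fin n} (hi : ξ i = false) :
    cubeWeight (Function.update ξ i true) = cubeWeight ξ + 1 := by
  have hsupport : Finset.univ.filter (fun k => Function.update ξ i true k = true) =
      insert i (Finset.univ.filter (fun k => ξ k = true)) := by
    ext k
    by_cases hk : k = i <;> simp [Function.update, hk]
  rw [cubeWeight, hsupport, Finset.card_insert_of_notMem (by simp [hi]), cubeWeight]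

/-- An edge is encoded by its initial vertex `ξ` and its direction `i`, with `ξ i = 0`; the face
is spanned at `(ξ, ξ')` by the directions `i` and `j`. -/
theorem mixed_face_coboundary_general {R : Type*} [CommRing R] {n n' : ℕ}
    (ε : (Fin n → Bool) → Fin n → Rˣ) (ε' : (Fin n' → Bool) → Fin n' → Rˣ)
    (ξ : Fin n → Bool) (ξ' : Fin n' → Bool) (i : Fin n) (j : Fin n')
    (hi : ξ i = false) :
    (ε ξ i) *
      ((-1 : Rˣ) ^ cubeWeight (Function.update ξ i true) * ε' ξ' j) *
      (ε ξ i)⁻¹ *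
      ((-1 : Rˣ) ^ cubeWeight ξ * ε' ξ' j)⁻¹ = -1 := by
  rw [cubeWeight_update_true hi, pow_succ, mul_inv_eq_iff_eq_mul, mul_inv_eq_iff_eq_mul]
  ac_rfl

/-- Let `ε`, `ε'` be unit-valued 1-cochains on `I^n`, `I^{n'}` (an edge is encoded by its
initial vertex `ξ` and its direction `i` with `ξ i = 0`). On the product cube define
`ε″(ζ,ξ') = ε(ζ)` on first-factor edges and `ε″(ξ,ζ') = (-1)^{‖ξ‖} ε'(ζ')` on second-factor
edges. Then on every mixed 2-face `S` (base vertex `(ξ,ξ')`, directions `i` and `j`) the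
multiplicative coboundary `δε″(S) = ε″(ζ_{*0}) ε″(ζ_{1*}) ε″(ζ_{*1})⁻¹ ε″(ζ_{0*})⁻¹`
equals `-1`. -/
theorem mixed_face_coboundary {R : Type*} [CommRing R] {n n' : ℕ}
    (ε : (Fin n → Bool) → Fin n → Rˣ) (ε' : (Fin n' → Bool) → Fin n' → Rˣ)
    (ξ : Fin n → Bool) (ξ' : Fin n' → Bool) (i : Fin n) (j : Fin n')
    (hi : ξ i = false) (hj : ξ' j = false) :
    (ε ξ i) *
      ((-1 : Rˣ) ^ cubeWeight (Function.update ξ i true) * ε' ξ' j) *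
      (ε ξ i)⁻¹ *
      ((-1 : Rˣ) ^ cubeWeight ξ * ε' ξ' j)⁻¹ = -1 :=
  mixed_face_coboundary_general ε ε' ξ ξ' i j hi
end

section
/- For every n ≥ 0 and every abelian group G, every multiplicative 2-cocycle ψ on the faces of the n-dimensional cube I^n with values in G is a coboundary: there exists a 1-cochain ε on the edges of I^n with δε = ψ. In particular, for any commutativity obstruction ψ there exists a sign assignment ε with δε = −ψ. -/
open Finset

namespace CubeCohomAux

variable {G : Type*} [CommGroup G] {n : ℕ}

/-- `ξ` with all coordinates `≥ k` set to `false`. -/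
def trunc (ξ : Fin n → Bool) (k : Fin n) : Fin n → Bool :=
  fun l => if k ≤ l then false else ξ l

def eps (ψ : (Fin n → Bool) → Fin n → Fin n → G) (ξ : Fin n → Bool) (i : Fin n) : G :=
  (∏ l ∈ univ.filter (fun l => i < l ∧ ξ l = true), ψ (trunc ξ l) i l)⁻¹

lemma comb (E1 E2 E3 E4 a b c d : G) :
    (E1*a⁻¹)*(E2*b⁻¹)*(E3*c⁻¹)⁻¹*(E4*d⁻¹)⁻¹ = d*c*(E1*E2*E3⁻¹*E4⁻¹)*b⁻¹*a⁻¹ := by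
  simp only [mul_inv_rev, inv_inv]
  simp only [mul_assoc, mul_comm, mul_left_comm]

lemma comb0 (P Q : G) : P⁻¹ * 1 * ((Q * P)⁻¹)⁻¹ * 1⁻¹ = Q := by
  simp [mul_comm]

lemma eps_split (ψ : (Fin n → Bool) → Fin n → Fin n → G)
    (ξ : Fin n → Bool) (k i : Fin n) (hk1 : ξ k = true)
    (hk2 : ∀ l, k < l → ξ l = false) (hik : i < k) :
    eps ψ ξ i = eps ψ (Function.update ξ k false) i *
      (ψ (Function.update ξ k false) i k)⁻¹ := by
  set ξ' := Function.update ξ k false with hξ'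
  have hmem : ∀ l, l ∈ univ.filter (fun l => i < l ∧ ξ' l = true) → l < k := by
    intro l hl
    simp only [mem_filter, mem_univ, true_and] at hl
    rcases lt_trichotomy l k with h | h | h
    · exact h
    · subst h; simp [hξ', Function.update_self] at hl
    · exfalso
      have := hk2 l h
      rw [hξ', Function.update_of_ne (ne_of_gt h)] at hl
      simp [this] at hl
  have hset : univ.filter (fun l => i < l ∧ ξ l = true)
      = insert k (univ.filter (fun l => i < l ∧ ξ' l = true)) := by
    ext l
    simp only [mem_filter, mem_univ, true_and, mem_insert]
    by_cases hlk : l = k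
    · subst hlk; simp [hik, hk1]
    · rw [hξ', Function.update_of_ne hlk]; tauto
  have hknot : k ∉ univ.filter (fun l => i < l ∧ ξ' l = true) := by
    simp [hξ', Function.update_self]
  have htr : trunc ξ k = ξ' := by
    funext m
    rcases le_or_gt k m with h | h
    · simp only [trunc, if_pos h]
      rcases eq_or_lt_of_le h with h' | h'
      · rw [hξ', ← h', Function.update_self]
      · rw [hξ', Function.update_of_ne (ne_of_gt h'), hk2 m h']
    · simp only [trunc, if_neg (not_le.mpr h)]
      rw [hξ', Function.update_of_ne (ne_of_lt h)]
  have hprod : ∏ l ∈ univ.filter (fun l => i < l ∧ ξ' l = true), ψ (trunc ξ l) i l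
      = ∏ l ∈ univ.filter (fun l => i < l ∧ ξ' l = true), ψ (trunc ξ' l) i l := by
    refine Finset.prod_congr rfl ?_
    intro l hl
    have hlk := hmem l hl
    have : trunc ξ l = trunc ξ' l := by
      funext m
      rcases le_or_gt l m with h | h
      · simp [trunc, h]
      · have hmk : m ≠ k := ne_of_lt (h.trans hlk)
        simp only [trunc, if_neg (not_le.mpr h)]
        rw [hξ', Function.update_of_ne hmk]
    rw [this]
  rw [eps, eps, hset, Finset.prod_insert hknot, htr, hprod, mul_inv_rev, mul_comm]

end CubeCohomAux

/-- Every multiplicative 2-cocycle on the `n`-cube with values in an abelian group is the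
coboundary of a 1-cochain. An edge is encoded by its initial vertex `ξ` and direction `i`
(with `ξ i = 0`); a 2-face by its base vertex `ξ` and two directions `i < j` (with
`ξ i = ξ j = 0`). The coboundary of a 1-cochain `ε` on the face `(ξ; i, j)` is
`ε(ξ;i)·ε(ξ+eᵢ;j)·ε(ξ+eⱼ;i)⁻¹·ε(ξ;j)⁻¹`; a 2-cochain `ψ` is a cocycle if its coboundary
on every 3-face `(ξ; i, j, k)`, `i < j < k`, is trivial:
`ψ(ξ;j,k)·ψ(ξ+eⱼ;i,k)·ψ(ξ;i,j)·ψ(ξ+eᵢ;j,k)⁻¹·ψ(ξ;i,k)⁻¹·ψ(ξ+eₖ;i,j)⁻¹ = 1`. -/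
theorem cube_second_cohomology_trivial {G : Type*} [CommGroup G] (n : ℕ)
    (ψ : (Fin n → Bool) → Fin n → Fin n → G)
    (hψ : ∀ (ξ : Fin n → Bool) (i j k : Fin n), i < j → j < k →
      ξ i = false → ξ j = false → ξ k = false →
      ψ ξ j k * ψ (Function.update ξ j true) i k * ψ ξ i j *
        (ψ (Function.update ξ i true) j k)⁻¹ * (ψ ξ i k)⁻¹ *
        (ψ (Function.update ξ k true) i j)⁻¹ = 1) :
    ∃ ε : (Fin n → Bool) → Fin n → G,
      ∀ (ξ : Fin n → Bool) (i j : Fin n), i < j → ξ i = false → ξ j = false →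
        ε ξ i * ε (Function.update ξ i true) j *
          (ε (Function.update ξ j true) i)⁻¹ * (ε ξ j)⁻¹ = ψ ξ i j := by
  classical
  open CubeCohomAux Finset in
  refine ⟨eps ψ, ?_⟩
  suffices h : ∀ (N : ℕ) (ξ : Fin n → Bool) (i j : Fin n), i < j → ξ i = false → ξ j = false →
      (univ.filter (fun l => j < l ∧ ξ l = true)).card = N →
      eps ψ ξ i * eps ψ (Function.update ξ i true) j *
        (eps ψ (Function.update ξ j true) i)⁻¹ * (eps ψ ξ j)⁻¹ = ψ ξ i j by
    intro ξ i j hij hi hj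
    exact h _ ξ i j hij hi hj rfl
  intro N
  induction N with
  | zero =>
    intro ξ i j hij hi hj hcard
    have hfe : univ.filter (fun l => j < l ∧ ξ l = true) = ∅ := Finset.card_eq_zero.mp hcard
    have hj' : ∀ l, j < l → ξ l = false := by
      intro l hl
      by_contra hc
      have hlt : ξ l = true := by
        cases h : ξ l
        · exact absurd h hc
        · rfl
      have : l ∈ univ.filter (fun l => j < l ∧ ξ l = true) := by
        simp [hl, hlt]
      rw [hfe] at this
      exact absurd this (Finset.notMem_empty l)
    have e1 : eps ψ ξ j = 1 := by
      rw [eps]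
      have : univ.filter (fun l => j < l ∧ ξ l = true) = ∅ := hfe
      rw [this, Finset.prod_empty, inv_one]
    have e2 : eps ψ (Function.update ξ i true) j = 1 := by
      rw [eps]
      have : univ.filter (fun l => j < l ∧ (Function.update ξ i true) l = true) = ∅ := by
        rw [Finset.filter_eq_empty_iff]
        intro l _
        rintro ⟨hl, hl2⟩
        rw [Function.update_of_ne (ne_of_gt (hij.trans hl))] at hl2
        rw [hj' l hl] at hl2
        exact absurd hl2 (by simp)
      rw [this, Finset.prod_empty, inv_one]
    -- the interesting two terms
    have hmemlt : ∀ l, l ∈ univ.filter (fun l => i < l ∧ ξ l = true) → l < j := by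
      intro l hl
      simp only [mem_filter, mem_univ, true_and] at hl
      rcases lt_trichotomy l j with h | h | h
      · exact h
      · exfalso; rw [h, hj] at hl; simp at hl
      · exfalso; rw [hj' l h] at hl; simp at hl
    have hset : univ.filter (fun l => i < l ∧ (Function.update ξ j true) l = true)
        = insert j (univ.filter (fun l => i < l ∧ ξ l = true)) := by
      ext l
      simp only [mem_filter, mem_univ, true_and, mem_insert]
      by_cases hlj : l = j
      · subst hlj; simp [hij]
      · rw [Function.update_of_ne hlj]; tauto
    have hjnot : j ∉ univ.filter (fun l => i < l ∧ ξ l = true) := by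
      simp [hj]
    have htrj : trunc (Function.update ξ j true) j = ξ := by
      funext m
      rcases le_or_gt j m with h | h
      · simp only [trunc, if_pos h]
        rcases eq_or_lt_of_le h with h' | h'
        · rw [← h', hj]
        · rw [hj' m h']
      · simp only [trunc, if_neg (not_le.mpr h)]
        rw [Function.update_of_ne (ne_of_lt h)]
    have hprod : ∏ l ∈ univ.filter (fun l => i < l ∧ ξ l = true),
          ψ (trunc (Function.update ξ j true) l) i l
        = ∏ l ∈ univ.filter (fun l => i < l ∧ ξ l = true), ψ (trunc ξ l) i l := by
      refine Finset.prod_congr rfl ?_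
      intro l hl
      have hlj := hmemlt l hl
      have : trunc (Function.update ξ j true) l = trunc ξ l := by
        funext m
        rcases le_or_gt l m with h | h
        · simp [trunc, h]
        · have hmj : m ≠ j := ne_of_lt (h.trans hlj)
          simp only [trunc, if_neg (not_le.mpr h)]
          rw [Function.update_of_ne hmj]
      rw [this]
    have e3 : eps ψ (Function.update ξ j true) i
        = (ψ ξ i j * ∏ l ∈ univ.filter (fun l => i < l ∧ ξ l = true), ψ (trunc ξ l) i l)⁻¹ := by
      rw [eps, hset, Finset.prod_insert hjnot, htrj, hprod]
    rw [e1, e2, e3, eps]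
    exact comb0 _ _
  | succ N ih =>
    intro ξ i j hij hi hj hcard
    have hne : (univ.filter (fun l => j < l ∧ ξ l = true)).Nonempty := by
      rw [← Finset.card_pos, hcard]; omega
    set S := univ.filter (fun l => j < l ∧ ξ l = true) with hS
    set k := S.max' hne with hk
    have hkS : k ∈ S := S.max'_mem hne
    have hjk : j < k := by
      have := hkS; rw [hS] at this
      simp only [mem_filter, mem_univ, true_and] at this
      exact this.1
    have hk1 : ξ k = true := by
      have := hkS; rw [hS] at this
      simp only [mem_filter, mem_univ, true_and] at this
      exact this.2
    have hik : i < k := hij.trans hjk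
    have hk2 : ∀ l, k < l → ξ l = false := by
      intro l hl
      by_contra hc
      have hlt : ξ l = true := by
        cases h : ξ l
        · exact absurd h hc
        · rfl
      have hlS : l ∈ S := by
        rw [hS]; simp [hjk.trans hl, hlt]
      have := S.le_max' l hlS
      rw [← hk] at this
      exact absurd hl (not_lt.mpr this)
    set ξ' := Function.update ξ k false with hξ'
    have hξ'i : ξ' i = false := by rw [hξ', Function.update_of_ne (ne_of_lt hik), hi]
    have hξ'j : ξ' j = false := by rw [hξ', Function.update_of_ne (ne_of_lt hjk), hj]
    have hξ'k : ξ' k = false := by rw [hξ', Function.update_self]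
    have hcard' : (univ.filter (fun l => j < l ∧ ξ' l = true)).card = N := by
      have hseteq : univ.filter (fun l => j < l ∧ ξ' l = true) = S.erase k := by
        ext l
        simp only [mem_filter, mem_univ, true_and, Finset.mem_erase, hS]
        by_cases hlk : l = k
        · subst hlk; simp [hξ', Function.update_self]
        · rw [hξ', Function.update_of_ne hlk]; tauto
      rw [hseteq, Finset.card_erase_of_mem hkS, hcard]
      omega
    have IH := ih ξ' i j hij hξ'i hξ'j hcard'
    -- the four splittings
    have A1 : eps ψ ξ i = eps ψ ξ' i * (ψ ξ' i k)⁻¹ := eps_split ψ ξ k i hk1 hk2 hik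
    have A2 : eps ψ ξ j = eps ψ ξ' j * (ψ ξ' j k)⁻¹ := eps_split ψ ξ k j hk1 hk2 hjk
    have A3 : eps ψ (Function.update ξ i true) j
        = eps ψ (Function.update ξ' i true) j * (ψ (Function.update ξ' i true) j k)⁻¹ := by
      have h1 : (Function.update ξ i true) k = true := by
        rw [Function.update_of_ne (ne_of_gt hik), hk1]
      have h2 : ∀ l, k < l → (Function.update ξ i true) l = false := by
        intro l hl
        rw [Function.update_of_ne (ne_of_gt (hik.trans hl)), hk2 l hl]
      have := eps_split ψ (Function.update ξ i true) k j h1 h2 hjk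
      rwa [Function.update_comm (ne_of_lt hik) true false ξ] at this
    have A4 : eps ψ (Function.update ξ j true) i
        = eps ψ (Function.update ξ' j true) i * (ψ (Function.update ξ' j true) i k)⁻¹ := by
      have h1 : (Function.update ξ j true) k = true := by
        rw [Function.update_of_ne (ne_of_gt hjk), hk1]
      have h2 : ∀ l, k < l → (Function.update ξ j true) l = false := by
        intro l hl
        rw [Function.update_of_ne (ne_of_gt (hjk.trans hl)), hk2 l hl]
      have := eps_split ψ (Function.update ξ j true) k i h1 h2 hik
      rwa [Function.update_comm (ne_of_lt hjk) true false ξ] at this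
    have hupd : Function.update ξ' k true = ξ := by
      rw [hξ', Function.update_idem, ← hk1, Function.update_eq_self]
    have key := hψ ξ' i j k hij hjk hξ'i hξ'j hξ'k
    rw [hupd] at key
    have hQ : ψ ξ' j k * ψ (Function.update ξ' j true) i k * ψ ξ' i j *
        (ψ (Function.update ξ' i true) j k)⁻¹ * (ψ ξ' i k)⁻¹ = ψ ξ i j :=
      mul_inv_eq_one.mp key
    rw [A1, A2, A3, A4, ← hQ, ← IH]
    exact comb _ _ _ _ _ _ _ _
end
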